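/- arXiv:1403.0089 — 4 statements merged into one kernel-verified Lean document; each statement's English description precedes it below -/
import Mathlib

section
/- For every β > 0 and every measurable function φ : ℝ → ℝ that is integrable on (0,1] with respect to each of the measures appearing below, one has ∫₀¹ ∫₀¹ φ(t^{1/β} · s^{1/(2β)}) dt ds + ∫₀¹ φ(s^{1/(2β)}) ds = ∫₀¹ u^{-1/2} φ(u^{1/(2β)}) du. -/
open MeasureTheory Set

lemma ftc_inv_sq {a : ℝ} (ha : 0 < a) (ha1 : a ≤ 1) :
    ∫ t in Icc a 1, ((t ^ 2)⁻¹ : ℝ) = a⁻¹ - 1 := by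
  rw [MeasureTheory.integral_Icc_eq_integral_Ioc, ← intervalIntegral.integral_of_le ha1]
  have hderiv : ∀ x ∈ uIcc a 1, HasDerivAt (fun t : ℝ => -t⁻¹) ((x ^ 2)⁻¹) x := by
    intro x hx
    rw [uIcc_of_le ha1] at hx
    have hx0 : x ≠ 0 := (lt_of_lt_of_le ha hx.1).ne'
    have h := (hasDerivAt_inv hx0).neg
    rw [neg_neg] at h
    exact h
  have hint : IntervalIntegrable (fun t : ℝ => (t ^ 2)⁻¹) volume a 1 := by
    apply ContinuousOn.intervalIntegrable
    apply ContinuousOn.inv₀ (continuousOn_pow 2)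
    intro x hx
    rw [uIcc_of_le ha1] at hx
    exact pow_ne_zero 2 (lt_of_lt_of_le ha hx.1).ne'
  rw [intervalIntegral.integral_eq_sub_of_hasDerivAt hderiv hint]
  simp only [inv_one]
  ring

lemma key_slice {u : ℝ} (hu : 0 < u) (hu1 : u ≤ 1) (C : ℝ) :
    (∫ t in Ioc (0 : ℝ) 1, if 0 < u ∧ u ≤ t ^ 2 then (t ^ 2)⁻¹ * C else 0) =
      (u ^ (-(1 : ℝ) / 2) - 1) * C := by
  have hsu : 0 < Real.sqrt u := Real.sqrt_pos.2 hu
  have hsu1 : Real.sqrt u ≤ 1 := by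
    rw [show (1 : ℝ) = Real.sqrt 1 by simp]
    exact Real.sqrt_le_sqrt hu1
  have hcongr : ∀ t ∈ Ioc (0 : ℝ) 1,
      (if 0 < u ∧ u ≤ t ^ 2 then (t ^ 2)⁻¹ * C else 0) =
        (Icc (Real.sqrt u) 1).indicator (fun t => (t ^ 2)⁻¹ * C) t := by
    intro t ht
    rw [Set.indicator_apply]
    have hiff : (0 < u ∧ u ≤ t ^ 2) ↔ t ∈ Icc (Real.sqrt u) 1 := by
      constructor
      · rintro ⟨_, h2⟩
        refine ⟨?_, ht.2⟩
        exact Real.sqrt_le_iff.mpr ⟨ht.1.le, h2⟩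
      · rintro ⟨h1, _⟩
        refine ⟨hu, ?_⟩
        calc u = Real.sqrt u ^ 2 := (Real.sq_sqrt hu.le).symm
        _ ≤ t ^ 2 := by
              apply pow_le_pow_left₀ hsu.le h1
    simp only [hiff]
  rw [setIntegral_congr_fun measurableSet_Ioc hcongr]
  rw [MeasureTheory.integral_indicator measurableSet_Icc,
    Measure.restrict_restrict measurableSet_Icc,
    inter_eq_left.mpr (fun x hx => mem_Ioc.mpr ⟨lt_of_lt_of_le hsu (mem_Icc.mp hx).1,
      (mem_Icc.mp hx).2⟩)]
  rw [MeasureTheory.integral_mul_const, ftc_inv_sq hsu hsu1]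
  congr 2
  rw [show (-(1 : ℝ) / 2) = -(1 / 2 : ℝ) by ring, Real.rpow_neg hu.le,
    ← Real.sqrt_eq_rpow]

theorem stmt_0 (β : ℝ) (hβ : 0 < β) (φ : ℝ → ℝ) (hmeas : Measurable φ)
    (h1 : IntegrableOn (fun p : ℝ × ℝ => φ (p.1 ^ (1 / β) * p.2 ^ (1 / (2 * β))))
      (Ioc 0 1 ×ˢ Ioc 0 1) (volume.prod volume))
    (h2 : IntegrableOn (fun s : ℝ => φ (s ^ (1 / (2 * β)))) (Ioc 0 1))
    (h3 : IntegrableOn (fun u : ℝ => u ^ (-(1 : ℝ) / 2) * φ (u ^ (1 / (2 * β)))) (Ioc 0 1)) :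
    (∫ s in Ioc (0 : ℝ) 1, ∫ t in Ioc (0 : ℝ) 1, φ (t ^ (1 / β) * s ^ (1 / (2 * β))))
      + ∫ s in Ioc (0 : ℝ) 1, φ (s ^ (1 / (2 * β)))
      = ∫ u in Ioc (0 : ℝ) 1, u ^ (-(1 : ℝ) / 2) * φ (u ^ (1 / (2 * β))) := by
  set I : Set ℝ := Ioc (0 : ℝ) 1 with hI
  set g : ℝ → ℝ := fun u => φ (u ^ (1 / (2 * β))) with hg
  have hg_meas : Measurable g :=
    hmeas.comp (Real.continuous_rpow_const (by positivity)).measurable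
  -- pointwise identity φ (t^{1/β} s^{1/(2β)}) = g (t² s)
  have hpt : ∀ t ∈ I, ∀ s ∈ I, φ (t ^ (1 / β) * s ^ (1 / (2 * β))) = g (t ^ 2 * s) := by
    intro t ht s hs
    have ht0 : (0 : ℝ) < t := ht.1
    have hs0 : (0 : ℝ) < s := hs.1
    have key : (t ^ 2 * s) ^ (1 / (2 * β)) = t ^ (1 / β) * s ^ (1 / (2 * β)) := by
      rw [Real.mul_rpow (by positivity) hs0.le, ← Real.rpow_natCast t 2,
        ← Real.rpow_mul ht0.le,
        show ((2 : ℕ) : ℝ) * (1 / (2 * β)) = 1 / β by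
          push_cast
          rw [mul_one_div, div_eq_div_iff (by positivity) hβ.ne']
          ring]
    simp only [hg, key]
  -- the auxiliary "triangle" integrand
  set T : ℝ × ℝ → ℝ := fun p => if 0 < p.2 ∧ p.2 ≤ p.1 ^ 2 then (p.1 ^ 2)⁻¹ * g p.2 else 0
    with hT
  have hT_meas : Measurable T := by
    apply Measurable.ite
    · exact (measurableSet_lt measurable_const measurable_snd).inter
        (measurableSet_le measurable_snd (measurable_fst.pow_const 2))
    · exact ((measurable_fst.pow_const 2).inv).mul (hg_meas.comp measurable_snd)
    · exact measurable_const
  -- Step A: rewrite double integral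
  have stepA : (∫ s in I, ∫ t in I, φ (t ^ (1 / β) * s ^ (1 / (2 * β))))
      = ∫ s in I, ∫ t in I, g (t ^ 2 * s) := by
    apply setIntegral_congr_fun measurableSet_Ioc
    intro s hs
    apply setIntegral_congr_fun measurableSet_Ioc
    intro t ht
    exact hpt t ht s hs
  -- integrability on the square
  have hprod : Integrable (fun p : ℝ × ℝ => g (p.1 ^ 2 * p.2))
      ((volume.restrict I).prod (volume.restrict I)) := by
    rw [Measure.prod_restrict]
    apply h1.congr
    filter_upwards [ae_restrict_mem (measurableSet_Ioc.prod measurableSet_Ioc)] with p hp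
    exact hpt p.1 hp.1 p.2 hp.2
  -- Step B: swap the square integral
  have stepB : (∫ s in I, ∫ t in I, g (t ^ 2 * s)) = ∫ t in I, ∫ s in I, g (t ^ 2 * s) := by
    apply integral_integral_swap
    exact hprod.swap
  -- Step C: inner linear substitution
  have stepC : ∀ t ∈ I, (∫ s in I, g (t ^ 2 * s)) = ∫ u in I, T (t, u) := by
    intro t ht
    have hc : (0 : ℝ) < t ^ 2 := pow_pos ht.1 2
    have hc1 : t ^ 2 ≤ 1 := by
      calc t ^ 2 ≤ 1 ^ 2 := by apply pow_le_pow_left₀ ht.1.le ht.2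
      _ = 1 := one_pow 2
    have e1 : (∫ s in I, g (t ^ 2 * s)) = (t ^ 2)⁻¹ * ∫ u in Ioc 0 (t ^ 2), g u := by
      rw [hI, ← intervalIntegral.integral_of_le zero_le_one,
        intervalIntegral.integral_comp_mul_left g hc.ne', mul_zero, mul_one,
        intervalIntegral.integral_of_le hc.le, smul_eq_mul]
    have e2 : (∫ u in I, T (t, u)) = (t ^ 2)⁻¹ * ∫ u in Ioc 0 (t ^ 2), g u := by
      have : ∀ u : ℝ, T (t, u) = (Ioc 0 (t ^ 2)).indicator (fun u => (t ^ 2)⁻¹ * g u) u := by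
        intro u
        rw [Set.indicator_apply]
        rfl
      simp only [this]
      rw [MeasureTheory.integral_indicator measurableSet_Ioc,
        Measure.restrict_restrict measurableSet_Ioc,
        inter_eq_left.mpr (Ioc_subset_Ioc_right hc1),
        MeasureTheory.integral_const_mul]
    rw [e1, ← e2]
  -- Triangle integrability
  have hT_int : Integrable T ((volume.restrict I).prod (volume.restrict I)) := by
    rw [integrable_prod_iff' hT_meas.aestronglyMeasurable]
    constructor
    · filter_upwards [ae_restrict_mem measurableSet_Ioc] with u hu
      have hbound : ∀ t : ℝ, ‖T (t, u)‖ ≤ u⁻¹ * |g u| := by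
        intro t
        have hTval : T (t, u) = if 0 < u ∧ u ≤ t ^ 2 then (t ^ 2)⁻¹ * g u else 0 := rfl
        rw [hTval]
        by_cases h : 0 < u ∧ u ≤ t ^ 2
        · rw [if_pos h, Real.norm_eq_abs, abs_mul,
            abs_of_nonneg (inv_nonneg.2 (sq_nonneg t))]
          apply mul_le_mul_of_nonneg_right _ (abs_nonneg _)
          exact inv_anti₀ h.1 h.2
        · rw [if_neg h, norm_zero]
          exact mul_nonneg (inv_nonneg.2 hu.1.le) (abs_nonneg _)
      apply Integrable.mono' (g := fun _ : ℝ => u⁻¹ * |g u|)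
      · exact integrableOn_const (by simp [hI])
      · exact (hT_meas.comp (measurable_id.prodMk measurable_const)).aestronglyMeasurable
      · filter_upwards with t using hbound t
    · apply Integrable.congr ((h3.norm).sub (h2.norm))
      filter_upwards [ae_restrict_mem measurableSet_Ioc] with u hu
      have hcalc : (∫ t in I, ‖T (t, u)‖)
          = (u ^ (-(1 : ℝ) / 2) - 1) * |g u| := by
        have : ∀ t ∈ I, ‖T (t, u)‖ = if 0 < u ∧ u ≤ t ^ 2 then (t ^ 2)⁻¹ * |g u| else 0 := by
          intro t ht
          have hTval : T (t, u) = if 0 < u ∧ u ≤ t ^ 2 then (t ^ 2)⁻¹ * g u else 0 := rfl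
          rw [hTval]
          by_cases h : 0 < u ∧ u ≤ t ^ 2
          · rw [if_pos h, if_pos h, Real.norm_eq_abs, abs_mul,
              abs_of_nonneg (inv_nonneg.2 (sq_nonneg t))]
          · rw [if_neg h, if_neg h, norm_zero]
        rw [setIntegral_congr_fun measurableSet_Ioc this]
        exact key_slice hu.1 hu.2 |g u|
      have hr : (0 : ℝ) ≤ u ^ (-(1 : ℝ) / 2) := Real.rpow_nonneg hu.1.le _
      rw [hcalc]
      simp only [Pi.sub_apply, Real.norm_eq_abs]
      rw [abs_mul, abs_of_nonneg hr]
      ring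
  -- Step D: swap the triangle integral and evaluate
  have stepD : (∫ t in I, ∫ u in I, T (t, u)) = ∫ u in I, ∫ t in I, T (t, u) := by
    apply integral_integral_swap
    exact hT_int
  have stepE : (∫ u in I, ∫ t in I, T (t, u))
      = ∫ u in I, (u ^ (-(1 : ℝ) / 2) - 1) * g u := by
    apply setIntegral_congr_fun measurableSet_Ioc
    intro u hu
    exact key_slice hu.1 hu.2 (g u)
  have stepF : (∫ u in I, (u ^ (-(1 : ℝ) / 2) - 1) * g u)
      = (∫ u in I, u ^ (-(1 : ℝ) / 2) * g u) - ∫ u in I, g u := by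
    rw [← MeasureTheory.integral_sub h3 h2]
    apply setIntegral_congr_fun measurableSet_Ioc
    intro u hu
    ring
  have hchain : (∫ s in I, ∫ t in I, φ (t ^ (1 / β) * s ^ (1 / (2 * β))))
      = (∫ u in I, u ^ (-(1 : ℝ) / 2) * g u) - ∫ u in I, g u := by
    rw [stepA, stepB, setIntegral_congr_fun measurableSet_Ioc stepC, stepD, stepE, stepF]
  rw [hchain]
  ring
end

section
/- Let β > 0 and let φ : (0,1] → ℝ be continuous with ∫₀¹ |φ(u)| u^{-1} du < ∞. Then ∫₀^∞ ∫₀¹ φ(v^{1/β} e^{-s}) dv ds = ∫₀¹ φ(u) (u^{-1} - u^{β-1}) du. -/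
open MeasureTheory Set

lemma prim_deriv (ψ : ℝ → ℝ) (hψ : IntegrableOn ψ (Ioc 0 1))
    (hcψ : ContinuousOn ψ (Ioo 0 1)) {t : ℝ} (ht : t ∈ Ioo (0:ℝ) 1) :
    HasDerivAt (fun x => ∫ u in Ioc (0:ℝ) x, ψ u) (ψ t) t := by
  have hmem : Ioo (0:ℝ) 1 ∈ nhds t := Ioo_mem_nhds ht.1 ht.2
  have hInt : IntervalIntegrable ψ volume 0 t := by
    rw [intervalIntegrable_iff_integrableOn_Ioc_of_le ht.1.le]
    exact hψ.mono_set (Ioc_subset_Ioc le_rfl ht.2.le)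
  have hmeas : StronglyMeasurableAtFilter ψ (nhds t) :=
    ⟨Ioo 0 1, hmem, hcψ.aestronglyMeasurable measurableSet_Ioo⟩
  have hc : ContinuousAt ψ t := hcψ.continuousAt hmem
  have h := intervalIntegral.integral_hasDerivAt_right hInt hmeas hc
  refine h.congr_of_eventuallyEq ?_
  filter_upwards [eventually_gt_nhds ht.1] with x hx
  rw [intervalIntegral.integral_of_le hx.le]

lemma exp_rpow' (x y : ℝ) : Real.exp x ^ y = Real.exp (x * y) := (Real.exp_mul x y).symm

lemma sub1 (β s : ℝ) (hβ : 0 < β) (φ : ℝ → ℝ) :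
    ∫ v in Ioc (0:ℝ) 1, φ (v ^ (1 / β) * Real.exp (-s))
      = ∫ u in Ioc (0:ℝ) (Real.exp (-s)), (β * Real.exp (β * s)) * (φ u * u ^ (β - 1)) := by
  set S : Set ℝ := Ioc 0 (Real.exp (-s)) with hS
  have himg : (fun u : ℝ => u ^ β * Real.exp (β * s)) '' S = Ioc 0 1 := by
    ext v
    constructor
    · rintro ⟨u, hu, rfl⟩
      constructor
      · exact mul_pos (Real.rpow_pos_of_pos hu.1 β) (Real.exp_pos _)
      · have h1 : u ^ β ≤ Real.exp (-s) ^ β := Real.rpow_le_rpow hu.1.le hu.2 hβ.le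
        have h2 : Real.exp (-s) ^ β = Real.exp (-(β * s)) := by
          rw [exp_rpow']; ring_nf
        calc u ^ β * Real.exp (β * s) ≤ Real.exp (-(β * s)) * Real.exp (β * s) := by
              rw [← h2]; exact mul_le_mul_of_nonneg_right h1 (Real.exp_pos _).le
          _ = 1 := by rw [← Real.exp_add]; simp
    · rintro hv
      refine ⟨v ^ (1/β) * Real.exp (-s),
        ⟨mul_pos (Real.rpow_pos_of_pos hv.1 _) (Real.exp_pos _), ?_⟩, ?_⟩
      · have h1 : v ^ (1/β) ≤ 1 := Real.rpow_le_one hv.1.le hv.2 (by positivity)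
        nlinarith [Real.exp_pos (-s)]
      · show (v ^ (1/β) * Real.exp (-s)) ^ β * Real.exp (β * s) = v
        have h2 : (v ^ (1/β) * Real.exp (-s)) ^ β = v * Real.exp (-s * β) := by
          rw [Real.mul_rpow (Real.rpow_nonneg hv.1.le _) (Real.exp_pos _).le, one_div,
            Real.rpow_inv_rpow hv.1.le hβ.ne', exp_rpow']
        rw [h2, mul_assoc, ← Real.exp_add]
        ring_nf
        simp
  have hderiv : ∀ u ∈ S, HasDerivWithinAt (fun u : ℝ => u ^ β * Real.exp (β * s))
      ((β * u ^ (β - 1)) * Real.exp (β * s)) S u := by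
    intro u hu
    exact ((Real.hasDerivAt_rpow_const (Or.inl hu.1.ne')).mul_const _).hasDerivWithinAt
  have hinj : InjOn (fun u : ℝ => u ^ β * Real.exp (β * s)) S := by
    have : StrictMonoOn (fun u : ℝ => u ^ β * Real.exp (β * s)) S := by
      intro a ha b hb hab
      exact mul_lt_mul_of_pos_right (Real.rpow_lt_rpow ha.1.le hab hβ) (Real.exp_pos _)
    exact this.injOn
  have key := integral_image_eq_integral_abs_deriv_smul measurableSet_Ioc hderiv hinj
    (fun v => φ (v ^ (1 / β) * Real.exp (-s)))
  rw [himg] at key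
  rw [key]
  refine setIntegral_congr_fun measurableSet_Ioc (fun u hu => ?_)
  have hu0 : 0 < u := hu.1
  have harg : (u ^ β * Real.exp (β * s)) ^ (1/β) * Real.exp (-s) = u := by
    rw [Real.mul_rpow (Real.rpow_nonneg hu0.le _) (Real.exp_pos _).le, one_div,
      Real.rpow_rpow_inv hu0.le hβ.ne', exp_rpow', mul_assoc, ← Real.exp_add]
    have h3 : β * s * β⁻¹ + -s = 0 := by field_simp; ring
    rw [h3, Real.exp_zero, mul_one]
  show |β * u ^ (β - 1) * Real.exp (β * s)| • φ ((u ^ β * Real.exp (β * s)) ^ (1/β) * Real.exp (-s))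
      = (β * Real.exp (β * s)) * (φ u * u ^ (β - 1))
  rw [harg, abs_of_pos (by exact mul_pos (mul_pos hβ (Real.rpow_pos_of_pos hu0 _)) (Real.exp_pos _)),
    smul_eq_mul]
  ring

lemma sub2_img : (fun s : ℝ => Real.exp (-s)) '' Ioi 0 = Ioo 0 1 := by
  ext u
  constructor
  · rintro ⟨s, hs, rfl⟩
    exact ⟨Real.exp_pos _, by rw [Real.exp_lt_one_iff]; linarith [mem_Ioi.mp hs]⟩
  · rintro ⟨h0, h1⟩
    refine ⟨-Real.log u, ?_, by show Real.exp (-(-Real.log u)) = u; rw [neg_neg, Real.exp_log h0]⟩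
    simpa using Real.log_neg h0 h1

lemma sub2_deriv : ∀ s ∈ Ioi (0:ℝ), HasDerivWithinAt (fun s : ℝ => Real.exp (-s))
    (-Real.exp (-s)) (Ioi 0) s := by
  intro s _
  have : HasDerivAt (fun s : ℝ => Real.exp (-s)) (Real.exp (-s) * (-1)) s :=
    (hasDerivAt_neg s).exp
  simpa using this.hasDerivWithinAt

lemma sub2_inj : InjOn (fun s : ℝ => Real.exp (-s)) (Ioi 0) := by
  intro a _ b _ h
  have := Real.exp_injective h
  linarith [neg_injective this]

lemma sub2_eq (g : ℝ → ℝ) :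
    ∫ u in Ioo (0:ℝ) 1, g u = ∫ s in Ioi (0:ℝ), Real.exp (-s) * g (Real.exp (-s)) := by
  have key := integral_image_eq_integral_abs_deriv_smul measurableSet_Ioi sub2_deriv sub2_inj g
  rw [sub2_img] at key
  rw [key]
  refine setIntegral_congr_fun measurableSet_Ioi (fun s _ => ?_)
  rw [abs_neg, abs_of_pos (Real.exp_pos _), smul_eq_mul]

lemma sub2_int (g : ℝ → ℝ) (h : IntegrableOn g (Ioo 0 1)) :
    IntegrableOn (fun s => Real.exp (-s) * g (Real.exp (-s))) (Ioi 0) := by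
  have key := (integrableOn_image_iff_integrableOn_abs_deriv_smul measurableSet_Ioi
    sub2_deriv sub2_inj g)
  rw [sub2_img] at key
  have h2 := key.mp h
  refine h2.congr_fun (fun s _ => ?_) measurableSet_Ioi
  beta_reduce
  rw [abs_neg, abs_of_pos (Real.exp_pos _), smul_eq_mul]

set_option maxHeartbeats 1000000 in
theorem stmt_2 (β : ℝ) (hβ : 0 < β) (φ : ℝ → ℝ)
    (hcont : ContinuousOn φ (Ioc 0 1))
    (hint : IntegrableOn (fun u : ℝ => |φ u| * u⁻¹) (Ioc 0 1)) :
    ∫ s in Ioi (0 : ℝ), ∫ v in Ioc (0 : ℝ) 1, φ (v ^ (1 / β) * Real.exp (-s))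
      = ∫ u in Ioc (0 : ℝ) 1, φ u * (u⁻¹ - u ^ (β - 1)) := by
  set m : ℝ → ℝ := fun u => |φ u| * u⁻¹ with hmdef
  set ψ : ℝ → ℝ := fun u => φ u * u ^ (β - 1) with hψdef
  set ψb : ℝ → ℝ := fun u => |φ u| * u ^ (β - 1) with hψbdef
  -- basic pointwise facts
  have hb1 : ∀ u ∈ Ioc (0:ℝ) 1, u ^ (β - 1) ≤ u⁻¹ := by
    intro u hu
    have h1 : u ^ (β - 1) = u ^ β * u⁻¹ := by
      rw [show β - 1 = β + (-1) by ring, Real.rpow_add hu.1, Real.rpow_neg_one]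
    rw [h1]
    calc u ^ β * u⁻¹ ≤ 1 * u⁻¹ := by
          exact mul_le_mul_of_nonneg_right (Real.rpow_le_one hu.1.le hu.2 hβ.le)
            (inv_nonneg.2 hu.1.le)
      _ = u⁻¹ := one_mul _
  have hrnn : ∀ u ∈ Ioc (0:ℝ) 1, (0:ℝ) ≤ u ^ (β - 1) := fun u hu => Real.rpow_nonneg hu.1.le _
  -- measurability
  have hφm : AEStronglyMeasurable φ (volume.restrict (Ioc 0 1)) :=
    hcont.aestronglyMeasurable measurableSet_Ioc
  have hrc : ContinuousOn (fun u : ℝ => u ^ (β - 1)) (Ioc 0 1) := fun u hu =>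
    (Real.continuousAt_rpow_const u _ (Or.inl hu.1.ne')).continuousWithinAt
  have hrm : AEStronglyMeasurable (fun u : ℝ => u ^ (β - 1)) (volume.restrict (Ioc 0 1)) :=
    hrc.aestronglyMeasurable measurableSet_Ioc
  -- integrability on (0,1]
  have hψint : IntegrableOn ψ (Ioc 0 1) := by
    refine Integrable.mono hint (hφm.mul hrm) ?_
    rw [ae_restrict_iff' measurableSet_Ioc]
    refine ae_of_all _ fun u hu => ?_
    have h1 : ‖ψ u‖ = |φ u| * u ^ (β - 1) := by
      rw [Real.norm_eq_abs, abs_mul, abs_of_nonneg (hrnn u hu)]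
    have h2 : ‖m u‖ = |φ u| * u⁻¹ := by
      rw [Real.norm_eq_abs, abs_mul, abs_abs, abs_of_nonneg (inv_nonneg.2 hu.1.le)]
    rw [h1, h2]
    exact mul_le_mul_of_nonneg_left (hb1 u hu) (abs_nonneg _)
  have hψbint : IntegrableOn ψb (Ioc 0 1) := by
    refine Integrable.mono hint ((hφm.norm.congr ?_).mul hrm) ?_
    · exact ae_of_all _ fun u => (Real.norm_eq_abs _)
    rw [ae_restrict_iff' measurableSet_Ioc]
    refine ae_of_all _ fun u hu => ?_
    have h1 : ‖ψb u‖ = |φ u| * u ^ (β - 1) := by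
      rw [Real.norm_eq_abs, abs_mul, abs_abs, abs_of_nonneg (hrnn u hu)]
    have h2 : ‖m u‖ = |φ u| * u⁻¹ := by
      rw [Real.norm_eq_abs, abs_mul, abs_abs, abs_of_nonneg (inv_nonneg.2 hu.1.le)]
    rw [h1, h2]
    exact mul_le_mul_of_nonneg_left (hb1 u hu) (abs_nonneg _)
  have hφinvint : IntegrableOn (fun u => φ u * u⁻¹) (Ioc 0 1) := by
    refine Integrable.mono hint (hφm.mul ((continuousOn_inv₀.mono ?_).aestronglyMeasurable
      measurableSet_Ioc)) ?_
    · intro u hu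
      exact hu.1.ne'
    rw [ae_restrict_iff' measurableSet_Ioc]
    refine ae_of_all _ fun u hu => ?_
    have h2 : ‖m u‖ = |φ u| * u⁻¹ := by
      rw [Real.norm_eq_abs, abs_mul, abs_abs, abs_of_nonneg (inv_nonneg.2 hu.1.le)]
    rw [Real.norm_eq_abs, abs_mul, abs_of_nonneg (inv_nonneg.2 hu.1.le), h2]
  -- continuity on (0,1)
  have hψcont : ContinuousOn ψ (Ioo 0 1) :=
    (hcont.mono Ioo_subset_Ioc_self).mul (hrc.mono Ioo_subset_Ioc_self)
  have hψbcont : ContinuousOn ψb (Ioo 0 1) :=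
    (hcont.abs.mono Ioo_subset_Ioc_self).mul (hrc.mono Ioo_subset_Ioc_self)
  have hmcont : ContinuousOn m (Ioo 0 1) :=
    (hcont.abs.mono Ioo_subset_Ioc_self).mul
      (continuousOn_inv₀.mono (fun u hu => hu.1.ne'))
  -- primitives
  set H : ℝ → ℝ := fun x => ∫ u in Ioc (0:ℝ) x, ψ u with hHdef
  set Hb : ℝ → ℝ := fun x => ∫ u in Ioc (0:ℝ) x, ψb u with hHbdef
  set M : ℝ → ℝ := fun x => ∫ u in Ioc (0:ℝ) x, m u with hMdef
  have hHd : ∀ t ∈ Ioo (0:ℝ) 1, HasDerivAt H (ψ t) t := fun t ht =>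
    prim_deriv ψ hψint hψcont ht
  have hHbd : ∀ t ∈ Ioo (0:ℝ) 1, HasDerivAt Hb (ψb t) t := fun t ht =>
    prim_deriv ψb hψbint hψbcont ht
  have hMd : ∀ t ∈ Ioo (0:ℝ) 1, HasDerivAt M (m t) t := fun t ht =>
    prim_deriv m hint hmcont ht
  have hHcont : ContinuousOn H (Icc 0 1) :=
    intervalIntegral.continuousOn_primitive ((integrableOn_Icc_iff_integrableOn_Ioc (by simp)).2 hψint)
  have hHbcont : ContinuousOn Hb (Icc 0 1) :=
    intervalIntegral.continuousOn_primitive ((integrableOn_Icc_iff_integrableOn_Ioc (by simp)).2 hψbint)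
  have hMcont : ContinuousOn M (Icc 0 1) :=
    intervalIntegral.continuousOn_primitive ((integrableOn_Icc_iff_integrableOn_Ioc (by simp)).2 hint)
  -- nonnegativity of Hb
  have hHbnn : ∀ t, 0 ≤ Hb t := fun t =>
    setIntegral_nonneg measurableSet_Ioc fun u hu =>
      mul_nonneg (abs_nonneg _) (Real.rpow_nonneg hu.1.le _)
  -- bounds
  have hHle : ∀ t ∈ Ioc (0:ℝ) 1, |H t| ≤ Hb t := by
    intro t ht
    have h1 : |H t| ≤ ∫ u in Ioc (0:ℝ) t, ‖ψ u‖ := by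
      rw [← Real.norm_eq_abs]
      exact norm_integral_le_integral_norm _
    refine h1.trans (le_of_eq ?_)
    refine setIntegral_congr_fun measurableSet_Ioc fun u hu => ?_
    rw [Real.norm_eq_abs, abs_mul, abs_of_nonneg (Real.rpow_nonneg hu.1.le _)]
  have hHble : ∀ t ∈ Ioc (0:ℝ) 1, Hb t ≤ t ^ β * M t := by
    intro t ht
    have hsub : Ioc (0:ℝ) t ⊆ Ioc 0 1 := Ioc_subset_Ioc le_rfl ht.2
    have h2 : Hb t ≤ ∫ u in Ioc (0:ℝ) t, t ^ β * m u := by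
      refine setIntegral_mono_on (hψbint.mono_set hsub)
        ((hint.mono_set hsub).const_mul _) measurableSet_Ioc fun u hu => ?_
      have hu1 : u ∈ Ioc (0:ℝ) 1 := hsub hu
      have h3 : u ^ (β - 1) = u ^ β * u⁻¹ := by
        rw [show β - 1 = β + (-1) by ring, Real.rpow_add hu.1, Real.rpow_neg_one]
      have h4 : u ^ β ≤ t ^ β := Real.rpow_le_rpow hu.1.le hu.2 hβ.le
      calc |φ u| * u ^ (β - 1) = u ^ β * (|φ u| * u⁻¹) := by rw [h3]; ring
        _ ≤ t ^ β * (|φ u| * u⁻¹) := by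
            refine mul_le_mul_of_nonneg_right h4 ?_
            exact mul_nonneg (abs_nonneg _) (inv_nonneg.2 hu.1.le)
        _ = t ^ β * m u := rfl
    rwa [integral_const_mul] at h2
  -- tendsto of M(exp(-s)) to 0
  have hexpIci : ∀ s : ℝ, 0 ≤ s → Real.exp (-s) ∈ Icc (0:ℝ) 1 := fun s hs =>
    ⟨(Real.exp_pos _).le, Real.exp_le_one_iff.2 (by linarith)⟩
  have hexp_tendsto : Filter.Tendsto (fun s : ℝ => Real.exp (-s)) Filter.atTop
      (nhdsWithin 0 (Icc (0:ℝ) 1)) := by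
    rw [tendsto_nhdsWithin_iff]
    constructor
    · exact Real.tendsto_exp_atBot.comp Filter.tendsto_neg_atTop_atBot
    · filter_upwards [Filter.eventually_ge_atTop (0:ℝ)] with s hs
      exact hexpIci s hs
  have hM0 : M 0 = 0 := by simp [hMdef]
  have hMten : Filter.Tendsto (fun s : ℝ => M (Real.exp (-s))) Filter.atTop (nhds 0) := by
    have := (hMcont 0 (left_mem_Icc.2 zero_le_one)).tendsto.comp hexp_tendsto
    rwa [hM0] at this
  -- membership
  have hexp_mem : ∀ s ∈ Ioi (0:ℝ), Real.exp (-s) ∈ Ioo (0:ℝ) 1 := fun s hs =>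
    ⟨Real.exp_pos _, Real.exp_lt_one_iff.2 (by simpa using (mem_Ioi.mp hs))⟩
  -- derivative of compositions
  have hcompd : ∀ (P p : ℝ → ℝ), (∀ t ∈ Ioo (0:ℝ) 1, HasDerivAt P (p t) t) →
      ∀ s ∈ Ioi (0:ℝ), HasDerivAt (fun s => P (Real.exp (-s)))
        (p (Real.exp (-s)) * (-Real.exp (-s))) s := by
    intro P p hP s hs
    have hg : HasDerivAt (fun s : ℝ => Real.exp (-s)) (-Real.exp (-s)) s := by
      simpa using (hasDerivAt_neg s).exp
    exact (hP _ (hexp_mem s hs)).comp s hg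
  have hexpβ : ∀ s : ℝ, HasDerivAt (fun s => Real.exp (β * s)) (β * Real.exp (β * s)) s := by
    intro s
    have : HasDerivAt (fun s : ℝ => β * s) β s := by
      simpa using (hasDerivAt_id s).const_mul β
    simpa [mul_comm] using this.exp
  -- key exponential identity
  have hkey : ∀ s : ℝ, Real.exp (β * s) * (Real.exp (-s) ^ (β - 1) * (-Real.exp (-s))) = -1 := by
    intro s
    rw [exp_rpow']
    have h1 : Real.exp (β * s) * (Real.exp (-s * (β - 1)) * -Real.exp (-s))
        = -Real.exp (β * s + (-s * (β - 1) + -s)) := by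
      rw [Real.exp_add, Real.exp_add]; ring
    rw [h1, show β * s + (-s * (β - 1) + -s) = 0 by ring, Real.exp_zero]
  -- f and its derivative
  set f : ℝ → ℝ := fun s => Real.exp (β * s) * H (Real.exp (-s)) with hfdef
  set fb : ℝ → ℝ := fun s => Real.exp (β * s) * Hb (Real.exp (-s)) with hfbdef
  set C : ℝ := ∫ u in Ioc (0:ℝ) 1, m u with hCdef
  set w : ℝ → ℝ := fun s => fb s + (C - M (Real.exp (-s))) with hwdef
  have hfder : ∀ s ∈ Ioi (0:ℝ), HasDerivAt f
      (β * Real.exp (β * s) * H (Real.exp (-s)) - φ (Real.exp (-s))) s := by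
    intro s hs
    have h1 : HasDerivAt (fun s => Real.exp (β * s) * H (Real.exp (-s))) _ s :=
      (hexpβ s).mul (hcompd H ψ hHd s hs)
    convert h1 using 1
    linear_combination (-φ (Real.exp (-s))) * hkey s
  have hfbder : ∀ s ∈ Ioi (0:ℝ), HasDerivAt fb
      (β * Real.exp (β * s) * Hb (Real.exp (-s)) - |φ (Real.exp (-s))|) s := by
    intro s hs
    have h1 : HasDerivAt (fun s => Real.exp (β * s) * Hb (Real.exp (-s))) _ s :=
      (hexpβ s).mul (hcompd Hb ψb hHbd s hs)
    convert h1 using 1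
    linear_combination (-|φ (Real.exp (-s))|) * hkey s
  have hwder : ∀ s ∈ Ioi (0:ℝ), HasDerivAt w
      (β * Real.exp (β * s) * Hb (Real.exp (-s))) s := by
    intro s hs
    have h1 : HasDerivAt (fun s => fb s + (C - M (Real.exp (-s)))) _ s :=
      (hfbder s hs).add (HasDerivAt.const_sub C (hcompd M m hMd s hs))
    convert h1 using 1
    have he : Real.exp (-s) ≠ 0 := (Real.exp_pos _).ne'
    simp only [hmdef]
    field_simp
    ring
  -- continuity within at 0
  have hexpc : Continuous (fun s : ℝ => Real.exp (-s)) :=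
    Real.continuous_exp.comp continuous_neg
  have hmapsIci : MapsTo (fun s : ℝ => Real.exp (-s)) (Ici 0) (Icc (0:ℝ) 1) := fun s hs =>
    hexpIci s hs
  have hcompc : ∀ P : ℝ → ℝ, ContinuousOn P (Icc 0 1) →
      ContinuousWithinAt (fun s : ℝ => P (Real.exp (-s))) (Ici 0) 0 := by
    intro P hP
    have h1 : ContinuousWithinAt P (Icc (0:ℝ) 1) (Real.exp (-(0:ℝ))) := by
      rw [show Real.exp (-(0:ℝ)) = 1 by simp]
      exact hP 1 (right_mem_Icc.2 zero_le_one)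
    exact ContinuousWithinAt.comp (g := P) (f := fun s : ℝ => Real.exp (-s)) (x := (0:ℝ))
      h1 hexpc.continuousWithinAt hmapsIci
  have hfcont0 : ContinuousWithinAt f (Ici 0) 0 :=
    ((Real.continuous_exp.comp (continuous_const.mul continuous_id)).continuousWithinAt).mul
      (hcompc H hHcont)
  have hwcont0 : ContinuousWithinAt w (Ici 0) 0 := by
    refine ContinuousWithinAt.add ?_ ?_
    · exact ((Real.continuous_exp.comp
        (continuous_const.mul continuous_id)).continuousWithinAt).mul (hcompc Hb hHbcont)
    · exact continuousWithinAt_const.sub (hcompc M hMcont)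
  -- bound |f s| ≤ M (exp (-s)) for s > 0
  have hbound : ∀ s ∈ Ioi (0:ℝ), Real.exp (β * s) * Hb (Real.exp (-s)) ≤ M (Real.exp (-s)) := by
    intro s hs
    have he := hexp_mem s hs
    have he' : Real.exp (-s) ∈ Ioc (0:ℝ) 1 := ⟨he.1, he.2.le⟩
    have h1 : Hb (Real.exp (-s)) ≤ Real.exp (-s) ^ β * M (Real.exp (-s)) := hHble _ he'
    have h2 : Real.exp (β * s) * (Real.exp (-s) ^ β * M (Real.exp (-s)))
        = M (Real.exp (-s)) := by
      rw [exp_rpow', ← mul_assoc, ← Real.exp_add]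
      have : β * s + -s * β = 0 := by ring
      rw [this, Real.exp_zero, one_mul]
    calc Real.exp (β * s) * Hb (Real.exp (-s))
        ≤ Real.exp (β * s) * (Real.exp (-s) ^ β * M (Real.exp (-s))) :=
          mul_le_mul_of_nonneg_left h1 (Real.exp_pos _).le
      _ = M (Real.exp (-s)) := h2
  have hften : Filter.Tendsto f Filter.atTop (nhds 0) := by
    refine squeeze_zero_norm' ?_ hMten
    filter_upwards [Filter.eventually_gt_atTop (0:ℝ)] with s hs
    have he := hexp_mem s hs
    have he' : Real.exp (-s) ∈ Ioc (0:ℝ) 1 := ⟨he.1, he.2.le⟩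
    have h1 : ‖f s‖ = Real.exp (β * s) * |H (Real.exp (-s))| := by
      rw [Real.norm_eq_abs, abs_mul, abs_of_pos (Real.exp_pos _)]
    rw [h1]
    calc Real.exp (β * s) * |H (Real.exp (-s))|
        ≤ Real.exp (β * s) * Hb (Real.exp (-s)) :=
          mul_le_mul_of_nonneg_left (hHle _ he') (Real.exp_pos _).le
      _ ≤ M (Real.exp (-s)) := hbound s hs
  have hfbten : Filter.Tendsto fb Filter.atTop (nhds 0) := by
    refine squeeze_zero_norm' ?_ hMten
    filter_upwards [Filter.eventually_gt_atTop (0:ℝ)] with s hs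
    have h1 : ‖fb s‖ = Real.exp (β * s) * Hb (Real.exp (-s)) := by
      rw [Real.norm_eq_abs, abs_mul, abs_of_pos (Real.exp_pos _),
        abs_of_nonneg (hHbnn _)]
    rw [h1]
    exact hbound s hs
  have hwten : Filter.Tendsto w Filter.atTop (nhds C) := by
    have := hfbten.add (Filter.Tendsto.sub (tendsto_const_nhds (x := C)) hMten)
    simpa using this
  -- integrability of the dominating function
  have hgbarint : IntegrableOn (fun s => β * Real.exp (β * s) * Hb (Real.exp (-s))) (Ioi 0) :=
    integrableOn_Ioi_deriv_of_nonneg hwcont0 hwder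
      (fun s hs => mul_nonneg (mul_nonneg hβ.le (Real.exp_pos _).le) (hHbnn _)) hwten
  -- integrability of G0
  have hG0cont : ContinuousOn (fun s => β * Real.exp (β * s) * H (Real.exp (-s))) (Ici 0) := by
    refine ContinuousOn.mul ?_ (hHcont.comp hexpc.continuousOn hmapsIci)
    exact (continuous_const.mul (Real.continuous_exp.comp
      (continuous_const.mul continuous_id))).continuousOn
  have hG0int : IntegrableOn (fun s => β * Real.exp (β * s) * H (Real.exp (-s))) (Ioi 0) := by
    refine Integrable.mono hgbarint ((hG0cont.mono Ioi_subset_Ici_self).aestronglyMeasurable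
      measurableSet_Ioi) ?_
    rw [ae_restrict_iff' measurableSet_Ioi]
    refine ae_of_all _ fun s hs => ?_
    have he := hexp_mem s hs
    have he' : Real.exp (-s) ∈ Ioc (0:ℝ) 1 := ⟨he.1, he.2.le⟩
    have h1 : ‖β * Real.exp (β * s) * H (Real.exp (-s))‖
        = β * Real.exp (β * s) * |H (Real.exp (-s))| := by
      rw [Real.norm_eq_abs, abs_mul, abs_of_pos (mul_pos hβ (Real.exp_pos _))]
    have h2 : ‖β * Real.exp (β * s) * Hb (Real.exp (-s))‖
        = β * Real.exp (β * s) * Hb (Real.exp (-s)) := by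
      rw [Real.norm_eq_abs, abs_of_nonneg
        (mul_nonneg (mul_nonneg hβ.le (Real.exp_pos _).le) (hHbnn _))]
    rw [h1, h2]
    exact mul_le_mul_of_nonneg_left (hHle _ he') (mul_nonneg hβ.le (Real.exp_pos _).le)
  -- integrability of φ(exp(-s))
  have hφeint : IntegrableOn (fun s => φ (Real.exp (-s))) (Ioi 0) := by
    have h1 := sub2_int (fun u => φ u * u⁻¹) (hφinvint.mono_set Ioo_subset_Ioc_self)
    have h2 : (fun s => Real.exp (-s) * (φ (Real.exp (-s)) * (Real.exp (-s))⁻¹))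
        = fun s => φ (Real.exp (-s)) := by
      funext s
      have he : Real.exp (-s) ≠ 0 := (Real.exp_pos _).ne'
      field_simp
    rwa [h2] at h1
  -- FTC
  have hf0 : f 0 = H 1 := by simp [hfdef]
  have hf'int : IntegrableOn
      (fun s => β * Real.exp (β * s) * H (Real.exp (-s)) - φ (Real.exp (-s))) (Ioi 0) :=
    hG0int.sub hφeint
  have hFTC : ∫ s in Ioi (0:ℝ),
      (β * Real.exp (β * s) * H (Real.exp (-s)) - φ (Real.exp (-s))) = 0 - f 0 :=
    integral_Ioi_of_hasDerivAt_of_tendsto hfcont0 hfder hf'int hften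
  -- substitution for the φ(exp(-s)) integral
  have hsub2 : ∫ s in Ioi (0:ℝ), φ (Real.exp (-s)) = ∫ u in Ioc (0:ℝ) 1, φ u * u⁻¹ := by
    rw [integral_Ioc_eq_integral_Ioo, sub2_eq (fun u => φ u * u⁻¹)]
    refine setIntegral_congr_fun measurableSet_Ioi fun s _ => ?_
    have he : Real.exp (-s) ≠ 0 := (Real.exp_pos _).ne'
    field_simp
  -- main computation
  have hmain : ∫ s in Ioi (0:ℝ), ∫ v in Ioc (0:ℝ) 1, φ (v ^ (1 / β) * Real.exp (-s))
      = ∫ s in Ioi (0:ℝ), β * Real.exp (β * s) * H (Real.exp (-s)) := by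
    refine setIntegral_congr_fun measurableSet_Ioi fun s _ => ?_
    rw [sub1 β s hβ φ, integral_const_mul]
  rw [hmain]
  have hsplit : ∫ s in Ioi (0:ℝ), β * Real.exp (β * s) * H (Real.exp (-s))
      = (∫ s in Ioi (0:ℝ),
          (β * Real.exp (β * s) * H (Real.exp (-s)) - φ (Real.exp (-s))))
        + ∫ s in Ioi (0:ℝ), φ (Real.exp (-s)) := by
    rw [← integral_add hf'int hφeint]
    refine setIntegral_congr_fun measurableSet_Ioi fun s _ => ?_
    ring
  rw [hsplit, hFTC, hsub2, hf0]
  have hH1 : H 1 = ∫ u in Ioc (0:ℝ) 1, ψ u := rfl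
  rw [hH1, zero_sub, neg_add_eq_sub, ← integral_sub hφinvint hψint]
  refine setIntegral_congr_fun measurableSet_Ioc fun u hu => ?_
  simp only [hψdef]
  ring
end

section
/- Let β > 0 and let M be a measure on ℝ^d \ {0} with ∫ min(1, ‖x‖²) dM < ∞. Define M^{(β)}(A) = ∫₀¹ M(t^{-1/β} A) dt for Borel sets A bounded away from 0. Then M^{(β)} also satisfies ∫ min(1, ‖x‖²) dM^{(β)} < ∞, i.e., M^{(β)} is a Lévy spectral measure. -/
open MeasureTheory Set

theorem stmt_8 (d : ℕ) (β : ℝ) (hβ : 0 < β)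
    (M : Measure (EuclideanSpace ℝ (Fin d))) (hM0 : M {0} = 0)
    (hM : ∫⁻ x, ENNReal.ofReal (min 1 (‖x‖ ^ 2)) ∂M < ⊤) :
    ∫⁻ x, ENNReal.ofReal (min 1 (‖x‖ ^ 2))
        ∂(Measure.map (fun p : ℝ × EuclideanSpace ℝ (Fin d) => p.1 ^ (1 / β) • p.2)
          ((volume.restrict (Ioc 0 1)).prod M)) < ⊤ := by
  set E := EuclideanSpace ℝ (Fin d)
  have hf : Measurable fun x : E => ENNReal.ofReal (min 1 (‖x‖ ^ 2)) :=
    (measurable_const.min (measurable_norm.pow_const 2)).ennreal_ofReal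
  -- M restricted to {‖x‖ ≥ c} is finite
  have hball : ∀ c : ℝ, 0 < c → M {x : E | c ≤ ‖x‖} < ⊤ := by
    intro c hc
    have hs : MeasurableSet {x : E | c ≤ ‖x‖} :=
      measurable_norm measurableSet_Ici
    have hle : ENNReal.ofReal (min 1 (c ^ 2)) * M {x : E | c ≤ ‖x‖}
        ≤ ∫⁻ x, ENNReal.ofReal (min 1 (‖x‖ ^ 2)) ∂M := by
      rw [← setLIntegral_const]
      refine le_trans (setLIntegral_mono hf ?_) (setLIntegral_le_lintegral _ _)
      intro x hx
      have hx' : c ≤ ‖x‖ := hx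
      exact ENNReal.ofReal_le_ofReal (min_le_min le_rfl (by nlinarith [hc.le]))
    have hpos : 0 < ENNReal.ofReal (min 1 (c ^ 2)) := by
      rw [ENNReal.ofReal_pos]
      exact lt_min one_pos (by positivity)
    by_contra h
    push_neg at h
    rw [top_le_iff] at h
    rw [h, ENNReal.mul_top hpos.ne'] at hle
    exact hM.ne (top_le_iff.mp hle)
  haveI : SigmaFinite M := by
    refine ⟨⟨⟨fun n => {x : E | ((n:ℝ)+1)⁻¹ ≤ ‖x‖} ∪ {0}, fun _ => trivial, ?_, ?_⟩⟩⟩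
    · intro n
      refine lt_of_le_of_lt (measure_union_le _ _) ?_
      rw [hM0]
      simpa using hball _ (by positivity)
    · apply eq_univ_of_forall
      intro x
      rcases eq_or_ne x 0 with rfl | hx
      · exact mem_iUnion.mpr ⟨0, Or.inr rfl⟩
      · have hx' : 0 < ‖x‖ := norm_pos_iff.mpr hx
        obtain ⟨n, hn⟩ := exists_nat_one_div_lt hx'
        exact mem_iUnion.mpr ⟨n, Or.inl (by
          show ((n:ℝ)+1)⁻¹ ≤ ‖x‖
          rw [one_div] at hn
          exact_mod_cast hn.le)⟩
  have hmap : Measurable fun p : ℝ × E => p.1 ^ (1 / β) • p.2 :=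
    (((Real.continuous_rpow_const (by positivity)).measurable).comp measurable_fst).smul
      measurable_snd
  have hg : Measurable fun a : ℝ × E => ENNReal.ofReal (min 1 (‖a.1 ^ (1 / β) • a.2‖ ^ 2)) :=
    hf.comp hmap
  rw [lintegral_map hf hmap, lintegral_prod _ hg.aemeasurable]
  set C := ∫⁻ x, ENNReal.ofReal (min 1 (‖x‖ ^ 2)) ∂M with hC
  have hbound : ∫⁻ t in Ioc (0:ℝ) 1, ∫⁻ x, ENNReal.ofReal (min 1 (‖t ^ (1/β) • x‖ ^ 2)) ∂M
      ≤ ∫⁻ _ in Ioc (0:ℝ) 1, C := by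
    refine setLIntegral_mono measurable_const ?_
    intro t ht
    refine lintegral_mono fun x => ?_
    refine ENNReal.ofReal_le_ofReal (min_le_min le_rfl ?_)
    have h1 : t ^ (1/β) ≤ 1 := Real.rpow_le_one ht.1.le ht.2 (by positivity)
    have h0 : 0 ≤ t ^ (1/β) := Real.rpow_nonneg ht.1.le _
    rw [norm_smul, Real.norm_eq_abs, abs_of_nonneg h0, mul_pow]
    have h2 : (t ^ (1/β)) ^ 2 ≤ 1 := by nlinarith
    nlinarith [sq_nonneg (‖x‖)]
  refine lt_of_le_of_lt hbound ?_
  rw [setLIntegral_const]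
  refine ENNReal.mul_lt_top hM ?_
  simp [Real.volume_Ioc]
end

section
/- Let β > 0 and let M, G be Lévy measures on ℝ^d. If ∫₀¹ M(t^{-1/β}A) dt + M(A) = ∫₀¹ G(t^{-1/β}A) dt for all Borel sets A bounded away from 0, then M(A) = (1/2) ∫₀¹ G(t^{-1/(2β)}A) dt for all such A, and conversely. -/
open MeasureTheory Set ENNReal Function

namespace S13

variable {E : Type*} [NormedAddCommGroup E] [NormedSpace ℝ E]
  [MeasurableSpace E] [BorelSpace E]

lemma aux_finite (ν : Measure E)
    (hν : ∫⁻ x, ENNReal.ofReal (min 1 (‖x‖ ^ 2)) ∂ν < ⊤) {ε : ℝ} (hε : 0 < ε) :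
    ν {x | ε ≤ ‖x‖} < ⊤ := by
  set c := min 1 (ε ^ 2) with hc_def
  have hc : 0 < c := lt_min one_pos (by positivity)
  set S : Set E := {x | ε ≤ ‖x‖} with hS_def
  have hS : MeasurableSet S := measurableSet_le measurable_const measurable_norm
  have key : ENNReal.ofReal c * ν S ≤ ∫⁻ x, ENNReal.ofReal (min 1 (‖x‖ ^ 2)) ∂ν := by
    calc ENNReal.ofReal c * ν S = ∫⁻ _ in S, ENNReal.ofReal c ∂ν := by
            rw [setLIntegral_const]
      _ ≤ ∫⁻ x in S, ENNReal.ofReal (min 1 (‖x‖ ^ 2)) ∂ν := by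
            refine setLIntegral_mono (by fun_prop) ?_
            intro x hx
            refine ENNReal.ofReal_le_ofReal (min_le_min le_rfl ?_)
            exact pow_le_pow_left₀ hε.le hx 2
      _ ≤ ∫⁻ x, ENNReal.ofReal (min 1 (‖x‖ ^ 2)) ∂ν := setLIntegral_le_lintegral _ _
  by_contra h
  push_neg at h
  rw [top_le_iff.1 h, ENNReal.mul_top (by simpa using hc)] at key
  exact absurd (key.trans_lt hν) (by simp)

lemma meas_dilate (ν : Measure E) [SFinite ν] {A : Set E} (hA : MeasurableSet A) :
    Measurable (fun c : ℝ => ν ((fun x => c • x) ⁻¹' A)) := by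
  have h1 : ∀ c : ℝ, ν ((fun x => c • x) ⁻¹' A)
      = ∫⁻ x, A.indicator (fun _ => (1:ℝ≥0∞)) (c • x) ∂ν := by
    intro c
    have : (fun x : E => A.indicator (fun _ => (1:ℝ≥0∞)) (c • x))
        = ((fun x : E => c • x) ⁻¹' A).indicator (fun _ => (1:ℝ≥0∞)) := by
      ext x
      by_cases hx : c • x ∈ A <;> simp [Set.indicator_apply, hx]
    rw [this, lintegral_indicator (hA.preimage (measurable_const_smul c))]
    simp
  simp only [h1]
  have hmeas : Measurable (fun p : ℝ × E => A.indicator (fun _ => (1:ℝ≥0∞)) (p.1 • p.2)) :=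
    (measurable_const.indicator hA).comp (measurable_fst.smul measurable_snd)
  exact hmeas.lintegral_prod_right'

lemma dil_dil (c c' : ℝ) (A : Set E) :
    (fun x : E => c • x) ⁻¹' ((fun x : E => c' • x) ⁻¹' A)
      = (fun x : E => (c' * c) • x) ⁻¹' A := by
  ext x; simp [smul_smul]

lemma dil_one (A : Set E) : (fun x : E => (1:ℝ) • x) ⁻¹' A = A := by
  ext x; simp

lemma dil_subset {A : Set E} {ε : ℝ} (hεA : ∀ x ∈ A, ε ≤ ‖x‖) {c : ℝ}
    (hc0 : 0 < c) (hc1 : c ≤ 1) :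
    (fun x : E => c • x) ⁻¹' A ⊆ {x : E | ε ≤ ‖x‖} := by
  intro x hx
  have h1 : ε ≤ ‖c • x‖ := hεA _ hx
  rw [norm_smul, Real.norm_eq_abs, abs_of_pos hc0] at h1
  have h2 : c * ‖x‖ ≤ ‖x‖ := mul_le_of_le_one_left (norm_nonneg x) hc1
  exact le_trans h1 h2

lemma restrict_eq_of_subset {α : Type*} [MeasurableSpace α] (ν : Measure α)
    {S B : Set α} (hS : MeasurableSet S) (hBS : B ⊆ S) : ν.restrict S B = ν B := by
  rw [Measure.restrict_apply' hS, Set.inter_eq_left.mpr hBS]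

lemma two_pull (f : ℝ → ℝ≥0∞) :
    ∫⁻ u in Ioc (0:ℝ) 1, ENNReal.ofReal (2*u) * f u
      = 2 * ∫⁻ u in Ioc (0:ℝ) 1, ENNReal.ofReal u * f u := by
  rw [← lintegral_const_mul' 2 _ (by simp)]
  refine lintegral_congr fun u => ?_
  rw [ENNReal.ofReal_mul (by norm_num), ← mul_assoc]
  norm_num

lemma half_two (x : ℝ≥0∞) : 2 * x / 2 = x := by
  rw [mul_comm, mul_div_assoc, ENNReal.div_self (by norm_num) (by norm_num), mul_one]


lemma lintegral_image_1d {s : Set ℝ} {f f' : ℝ → ℝ} (hs : MeasurableSet s)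
    (hf' : ∀ x ∈ s, HasDerivWithinAt f (f' x) s x) (hf : InjOn f s) (g : ℝ → ℝ≥0∞) :
    ∫⁻ x in f '' s, g x = ∫⁻ x in s, ENNReal.ofReal |f' x| * g (f x) := by
  simpa only [ContinuousLinearMap.det_toSpanSingleton] using
    lintegral_image_eq_lintegral_abs_det_fderiv_mul volume hs
      (fun x hx => (hf' x hx).hasFDerivWithinAt) hf g

lemma cov_mul (f : ℝ → ℝ≥0∞) {s : ℝ} (hs : 0 < s) :
    ∫⁻ u in Ioc 0 s, f u = ENNReal.ofReal s * ∫⁻ t in Ioc (0:ℝ) 1, f (t * s) := by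
  have himg : (fun t : ℝ => t * s) '' Ioc 0 1 = Ioc 0 s := by
    ext x
    constructor
    · rintro ⟨t, ⟨ht0, ht1⟩, rfl⟩
      exact ⟨mul_pos ht0 hs, mul_le_of_le_one_left hs.le ht1⟩
    · rintro ⟨hx0, hxs⟩
      exact ⟨x / s, ⟨div_pos hx0 hs, (div_le_one hs).2 hxs⟩, div_mul_cancel₀ x hs.ne'⟩
  have hder : ∀ x ∈ Ioc (0:ℝ) 1, HasDerivWithinAt (fun t : ℝ => t * s) s (Ioc 0 1) x := by
    intro x _
    simpa using (hasDerivWithinAt_id x (Ioc (0:ℝ) 1)).mul_const s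
  have h := lintegral_image_1d (f := fun t : ℝ => t * s) (f' := fun _ => s)
    measurableSet_Ioc hder (fun a _ b _ h => mul_right_cancel₀ hs.ne' h) f
  rw [himg] at h
  rw [h]
  simp only [abs_of_pos hs]
  exact lintegral_const_mul' _ _ (by simp)

lemma cov_sq (f : ℝ → ℝ≥0∞) :
    ∫⁻ t in Ioc (0:ℝ) 1, f (Real.sqrt t) = ∫⁻ u in Ioc (0:ℝ) 1, ENNReal.ofReal (2*u) * f u := by
  have himg : (fun u : ℝ => u ^ 2) '' Ioc 0 1 = Ioc 0 1 := by
    ext x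
    constructor
    · rintro ⟨u, ⟨hu0, hu1⟩, rfl⟩
      exact ⟨by positivity, by show u^2 ≤ 1; nlinarith⟩
    · rintro ⟨hx0, hx1⟩
      exact ⟨Real.sqrt x, ⟨Real.sqrt_pos.2 hx0,
        by simpa using Real.sqrt_le_sqrt hx1⟩, Real.sq_sqrt hx0.le⟩
  have hder : ∀ x ∈ Ioc (0:ℝ) 1, HasDerivWithinAt (fun u : ℝ => u ^ 2) (2 * x) (Ioc 0 1) x := by
    intro x _
    simpa using (hasDerivWithinAt_id x (Ioc (0:ℝ) 1)).fun_pow 2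
  have hinj : InjOn (fun u : ℝ => u ^ 2) (Ioc 0 1) := by
    intro a ha b hb h
    simp only at h
    nlinarith [ha.1, hb.1]
  have h := lintegral_image_1d (f := fun u : ℝ => u ^ 2) (f' := fun x => 2 * x)
    measurableSet_Ioc hder hinj (fun t => f (Real.sqrt t))
  rw [himg] at h
  rw [h]
  refine setLIntegral_congr_fun measurableSet_Ioc ?_
  intro u hu
  beta_reduce
  rw [abs_of_pos (by linarith [hu.1] : (0:ℝ) < 2*u), Real.sqrt_sq hu.1.le]

lemma swap_Ioc (F : ℝ → ℝ → ℝ≥0∞) (hF : Measurable (uncurry F)) :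
    ∫⁻ s in Ioc (0:ℝ) 1, ∫⁻ u in Ioc (0:ℝ) 1, F s u
      = ∫⁻ u in Ioc (0:ℝ) 1, ∫⁻ s in Ioc (0:ℝ) 1, F s u :=
  lintegral_lintegral_swap hF.aemeasurable

lemma fubini_indicator (f : ℝ → ℝ≥0∞) (hf : Measurable f) :
    ∫⁻ s in Ioc (0:ℝ) 1, ∫⁻ u in Ioc (0:ℝ) s, f u
      = ∫⁻ u in Ioc (0:ℝ) 1, ENNReal.ofReal (1 - u) * f u := by
  set F : ℝ → ℝ → ℝ≥0∞ := fun s u => if u ≤ s then f u else 0 with hF_def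
  have hF : Measurable (uncurry F) :=
    Measurable.ite (measurableSet_le measurable_snd measurable_fst)
      (hf.comp measurable_snd) measurable_const
  have h1 : ∀ s ∈ Ioc (0:ℝ) 1, ∫⁻ u in Ioc (0:ℝ) s, f u = ∫⁻ u in Ioc (0:ℝ) 1, F s u := by
    intro s hs
    have he : ∀ u, F s u = (Iic s).indicator f u := by
      intro u; simp [hF_def, Set.indicator_apply]
    simp only [he]
    rw [lintegral_indicator measurableSet_Iic, Measure.restrict_restrict measurableSet_Iic,
      inter_comm, Ioc_inter_Iic, min_eq_right hs.2]
  have h2 : ∀ u ∈ Ioc (0:ℝ) 1, ∫⁻ s in Ioc (0:ℝ) 1, F s u = ENNReal.ofReal (1 - u) * f u := by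
    intro u hu
    have he : ∀ s, F s u = (Ici u).indicator (fun _ => f u) s := by
      intro s; simp [hF_def, Set.indicator_apply]
    simp only [he]
    rw [lintegral_indicator_const measurableSet_Ici, Measure.restrict_apply measurableSet_Ici]
    have heq : Ici u ∩ Ioc (0:ℝ) 1 = Icc u 1 := by
      ext s
      constructor
      · rintro ⟨ha, _, hc⟩; exact ⟨ha, hc⟩
      · rintro ⟨ha, hb⟩; exact ⟨ha, lt_of_lt_of_le hu.1 ha, hb⟩
    rw [heq, Real.volume_Icc, mul_comm]
  calc ∫⁻ s in Ioc (0:ℝ) 1, ∫⁻ u in Ioc (0:ℝ) s, f u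
      = ∫⁻ s in Ioc (0:ℝ) 1, ∫⁻ u in Ioc (0:ℝ) 1, F s u :=
        setLIntegral_congr_fun measurableSet_Ioc h1
    _ = ∫⁻ u in Ioc (0:ℝ) 1, ∫⁻ s in Ioc (0:ℝ) 1, F s u := swap_Ioc F hF
    _ = ∫⁻ u in Ioc (0:ℝ) 1, ENNReal.ofReal (1 - u) * f u :=
        setLIntegral_congr_fun measurableSet_Ioc h2

lemma combine (h : ℝ → ℝ≥0∞) (hh : Measurable h) :
    (∫⁻ u in Ioc (0:ℝ) 1, ENNReal.ofReal (1 - u) * h u)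
      + ∫⁻ u in Ioc (0:ℝ) 1, ENNReal.ofReal u * h u
      = ∫⁻ u in Ioc (0:ℝ) 1, h u := by
  rw [← lintegral_add_left (f := fun u => ENNReal.ofReal (1 - u) * h u) (by fun_prop)]
  refine setLIntegral_congr_fun measurableSet_Ioc ?_
  intro u hu
  beta_reduce
  have h1 : (1 - u) + u = 1 := by ring
  rw [← add_mul, ← ENNReal.ofReal_add (by linarith [hu.2]) hu.1.le, h1,
    ENNReal.ofReal_one, one_mul]

lemma core_forward (m g : ℝ → ℝ≥0∞) (hm : Measurable m) (hg : Measurable g)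
    (hmfin : ∫⁻ t in Ioc (0:ℝ) 1, m t ≠ ⊤)
    (H : ∀ s ∈ Ioc (0:ℝ) 1,
      (∫⁻ t in Ioc (0:ℝ) 1, m (t * s)) + m s = ∫⁻ t in Ioc (0:ℝ) 1, g (t * s)) :
    m 1 = ∫⁻ u in Ioc (0:ℝ) 1, ENNReal.ofReal u * g u := by
  have hA : ∀ s ∈ Ioc (0:ℝ) 1,
      (∫⁻ u in Ioc 0 s, m u) + ENNReal.ofReal s * m s = ∫⁻ u in Ioc 0 s, g u := by
    intro s hs
    rw [cov_mul m hs.1, cov_mul g hs.1, ← mul_add]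
    exact congrArg _ (H s hs)
  have hB : (∫⁻ u in Ioc (0:ℝ) 1, ENNReal.ofReal (1-u) * m u)
      + (∫⁻ s in Ioc (0:ℝ) 1, ENNReal.ofReal s * m s)
      = ∫⁻ u in Ioc (0:ℝ) 1, ENNReal.ofReal (1-u) * g u := by
    rw [← fubini_indicator m hm, ← fubini_indicator g hg,
      ← lintegral_add_right (g := fun s => ENNReal.ofReal s * m s) _ (by fun_prop)]
    exact setLIntegral_congr_fun measurableSet_Ioc hA
  have h1 := hA 1 ⟨one_pos, le_refl 1⟩
  rw [ENNReal.ofReal_one, one_mul] at h1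
  have hE : ∫⁻ t in Ioc (0:ℝ) 1, m t
      = ∫⁻ u in Ioc (0:ℝ) 1, ENNReal.ofReal (1-u) * g u := by
    rw [← combine m hm]; exact hB
  have h2 : (∫⁻ t in Ioc (0:ℝ) 1, m t) + m 1
      = (∫⁻ t in Ioc (0:ℝ) 1, m t) + ∫⁻ u in Ioc (0:ℝ) 1, ENNReal.ofReal u * g u := by
    rw [h1, hE]
    exact (combine g hg).symm
  exact (ENNReal.add_right_inj hmfin).1 h2

lemma core_reverse (m g : ℝ → ℝ≥0∞) (hg : Measurable g)
    (H : ∀ s ∈ Ioc (0:ℝ) 1, m s = ∫⁻ u in Ioc (0:ℝ) 1, ENNReal.ofReal u * g (s * u)) :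
    (∫⁻ t in Ioc (0:ℝ) 1, m t) + m 1 = ∫⁻ t in Ioc (0:ℝ) 1, g t := by
  have hFmeas : Measurable (uncurry fun s u : ℝ => ENNReal.ofReal u * g (s * u)) :=
    (measurable_snd.ennreal_ofReal).mul (hg.comp (measurable_fst.mul measurable_snd))
  have hswap : ∫⁻ t in Ioc (0:ℝ) 1, m t
      = ∫⁻ u in Ioc (0:ℝ) 1, ENNReal.ofReal (1 - u) * g u := by
    calc ∫⁻ s in Ioc (0:ℝ) 1, m s
        = ∫⁻ s in Ioc (0:ℝ) 1, ∫⁻ u in Ioc (0:ℝ) 1, ENNReal.ofReal u * g (s * u) :=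
          setLIntegral_congr_fun measurableSet_Ioc H
      _ = ∫⁻ u in Ioc (0:ℝ) 1, ∫⁻ s in Ioc (0:ℝ) 1, ENNReal.ofReal u * g (s * u) :=
          swap_Ioc _ hFmeas
      _ = ∫⁻ u in Ioc (0:ℝ) 1, ∫⁻ v in Ioc (0:ℝ) u, g v := by
          refine setLIntegral_congr_fun measurableSet_Ioc ?_
          intro u hu
          beta_reduce
          rw [lintegral_const_mul' _ _ ENNReal.ofReal_ne_top, ← cov_mul g hu.1]
      _ = ∫⁻ u in Ioc (0:ℝ) 1, ENNReal.ofReal (1 - u) * g u := fubini_indicator g hg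
  have h1 : m 1 = ∫⁻ u in Ioc (0:ℝ) 1, ENNReal.ofReal u * g u := by
    rw [H 1 ⟨one_pos, le_refl 1⟩]
    exact setLIntegral_congr_fun measurableSet_Ioc
      (fun u _ => by simp only [one_mul])
  rw [hswap, h1]
  exact combine g hg

end S13

open S13 in
theorem stmt_13 (d : ℕ) (β : ℝ) (hβ : 0 < β)
    (M G : Measure (EuclideanSpace ℝ (Fin d)))
    (hM : ∫⁻ x, ENNReal.ofReal (min 1 (‖x‖ ^ 2)) ∂M < ⊤)
    (hG : ∫⁻ x, ENNReal.ofReal (min 1 (‖x‖ ^ 2)) ∂G < ⊤) :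
    (∀ A : Set (EuclideanSpace ℝ (Fin d)), MeasurableSet A →
        (∃ ε > (0 : ℝ), ∀ x ∈ A, ε ≤ ‖x‖) →
        (∫⁻ t in Ioc (0 : ℝ) 1,
            M ((fun x : EuclideanSpace ℝ (Fin d) => t ^ (1 / β) • x) ⁻¹' A)) + M A
          = ∫⁻ t in Ioc (0 : ℝ) 1,
              G ((fun x : EuclideanSpace ℝ (Fin d) => t ^ (1 / β) • x) ⁻¹' A)) ↔
    (∀ A : Set (EuclideanSpace ℝ (Fin d)), MeasurableSet A →
        (∃ ε > (0 : ℝ), ∀ x ∈ A, ε ≤ ‖x‖) →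
        M A = (∫⁻ t in Ioc (0 : ℝ) 1,
            G ((fun x : EuclideanSpace ℝ (Fin d) => t ^ (1 / (2 * β)) • x) ⁻¹' A)) / 2) := by
  have hβ' : (0:ℝ) < 1 / β := by positivity
  constructor
  · intro h A hA hbd
    obtain ⟨ε, hε, hεA⟩ := hbd
    set S : Set (EuclideanSpace ℝ (Fin d)) := {x | ε ≤ ‖x‖} with hS_def
    have hS : MeasurableSet S := measurableSet_le measurable_const measurable_norm
    have hMS : M S < ⊤ := aux_finite M hM hε
    have hGS : G S < ⊤ := aux_finite G hG hε
    haveI : IsFiniteMeasure (M.restrict S) := ⟨by rwa [Measure.restrict_apply_univ]⟩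
    haveI : IsFiniteMeasure (G.restrict S) := ⟨by rwa [Measure.restrict_apply_univ]⟩
    set m : ℝ → ℝ≥0∞ := fun t =>
      M.restrict S ((fun x : EuclideanSpace ℝ (Fin d) => t ^ (1 / β) • x) ⁻¹' A) with hm_def
    set g : ℝ → ℝ≥0∞ := fun t =>
      G.restrict S ((fun x : EuclideanSpace ℝ (Fin d) => t ^ (1 / β) • x) ⁻¹' A) with hg_def
    have hrpow_meas : Measurable fun t : ℝ => t ^ (1 / β) :=
      (Real.continuous_rpow_const hβ'.le).measurable
    have hm : Measurable m := (meas_dilate (M.restrict S) hA).comp hrpow_meas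
    have hgm : Measurable g := (meas_dilate (G.restrict S) hA).comp hrpow_meas
    have hmem : ∀ {u : ℝ}, u ∈ Ioc (0:ℝ) 1 → ∀ {e : ℝ}, 0 ≤ e → (0 < u ^ e ∧ u ^ e ≤ 1) := by
      intro u hu e he
      exact ⟨Real.rpow_pos_of_pos hu.1 _, Real.rpow_le_one hu.1.le hu.2 he⟩
    have hconvM : ∀ {u : ℝ}, u ∈ Ioc (0:ℝ) 1 →
        M ((fun x : EuclideanSpace ℝ (Fin d) => u ^ (1 / β) • x) ⁻¹' A) = m u := by
      intro u hu
      obtain ⟨h1, h2⟩ := hmem hu hβ'.le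
      exact (restrict_eq_of_subset M hS (dil_subset hεA h1 h2)).symm
    have hconvG : ∀ {u : ℝ}, u ∈ Ioc (0:ℝ) 1 →
        G ((fun x : EuclideanSpace ℝ (Fin d) => u ^ (1 / β) • x) ⁻¹' A) = g u := by
      intro u hu
      obtain ⟨h1, h2⟩ := hmem hu hβ'.le
      exact (restrict_eq_of_subset G hS (dil_subset hεA h1 h2)).symm
    have hsq : ∀ {t : ℝ}, 0 ≤ t → t ^ (1 / (2 * β)) = (Real.sqrt t) ^ (1 / β) := by
      intro t ht
      have he : (1:ℝ) / (2 * β) = (1/2) * (1/β) := by rw [div_mul_div_comm, one_mul]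
      rw [he, Real.rpow_mul ht, Real.sqrt_eq_rpow]
    have hMA : M A = m 1 := by
      simp only [hm_def, Real.one_rpow, dil_one]
      exact (restrict_eq_of_subset M hS (fun x hx => hεA x hx)).symm
    have hH : ∀ s ∈ Ioc (0:ℝ) 1,
        (∫⁻ t in Ioc (0:ℝ) 1, m (t * s)) + m s = ∫⁻ t in Ioc (0:ℝ) 1, g (t * s) := by
      intro s hs
      obtain ⟨hs1, hs2⟩ := hmem hs hβ'.le
      have h0 := h ((fun x : EuclideanSpace ℝ (Fin d) => s ^ (1 / β) • x) ⁻¹' A)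
        (hA.preimage (measurable_const_smul _))
        ⟨ε, hε, fun x hx => dil_subset hεA hs1 hs2 hx⟩
      have hsetEq : ∀ t : ℝ, t ∈ Ioc (0:ℝ) 1 →
          (fun x : EuclideanSpace ℝ (Fin d) => t ^ (1 / β) • x) ⁻¹'
            ((fun x : EuclideanSpace ℝ (Fin d) => s ^ (1 / β) • x) ⁻¹' A)
          = (fun x : EuclideanSpace ℝ (Fin d) => (t * s) ^ (1 / β) • x) ⁻¹' A := by
        intro t ht
        rw [dil_dil]
        have hsc : s ^ (1 / β) * t ^ (1 / β) = (t * s) ^ (1 / β) := by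
          rw [Real.mul_rpow ht.1.le hs.1.le, mul_comm]
        rw [hsc]
      have hts : ∀ t : ℝ, t ∈ Ioc (0:ℝ) 1 → t * s ∈ Ioc (0:ℝ) 1 := by
        intro t ht
        exact ⟨mul_pos ht.1 hs.1, by nlinarith [ht.1.le, ht.2, hs.1.le, hs.2]⟩
      have hL : ∫⁻ t in Ioc (0:ℝ) 1,
          M ((fun x : EuclideanSpace ℝ (Fin d) => t ^ (1 / β) • x) ⁻¹'
            ((fun x : EuclideanSpace ℝ (Fin d) => s ^ (1 / β) • x) ⁻¹' A))
          = ∫⁻ t in Ioc (0:ℝ) 1, m (t * s) := by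
        refine setLIntegral_congr_fun measurableSet_Ioc ?_
        intro t ht
        beta_reduce
        rw [hsetEq t ht]
        exact hconvM (hts t ht)
      have hR : ∫⁻ t in Ioc (0:ℝ) 1,
          G ((fun x : EuclideanSpace ℝ (Fin d) => t ^ (1 / β) • x) ⁻¹'
            ((fun x : EuclideanSpace ℝ (Fin d) => s ^ (1 / β) • x) ⁻¹' A))
          = ∫⁻ t in Ioc (0:ℝ) 1, g (t * s) := by
        refine setLIntegral_congr_fun measurableSet_Ioc ?_
        intro t ht
        beta_reduce
        rw [hsetEq t ht]
        exact hconvG (hts t ht)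
      have hc : M ((fun x : EuclideanSpace ℝ (Fin d) => s ^ (1 / β) • x) ⁻¹' A) = m s :=
        hconvM hs
      rw [hL, hR, hc] at h0
      exact h0
    have hle : ∀ t : ℝ, m t ≤ M S := by
      intro t
      simp only [hm_def]
      calc M.restrict S ((fun x : EuclideanSpace ℝ (Fin d) => t ^ (1 / β) • x) ⁻¹' A)
          ≤ M.restrict S univ := measure_mono (subset_univ _)
        _ = M S := Measure.restrict_apply_univ S
    have hmfin : ∫⁻ t in Ioc (0:ℝ) 1, m t ≠ ⊤ := by
      have hlt : ∫⁻ t in Ioc (0:ℝ) 1, m t < ⊤ := by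
        calc ∫⁻ t in Ioc (0:ℝ) 1, m t ≤ ∫⁻ _ in Ioc (0:ℝ) 1, M S :=
              lintegral_mono fun t => hle t
          _ = M S * volume (Ioc (0:ℝ) 1) := setLIntegral_const _ _
          _ < ⊤ := by
              rw [Real.volume_Ioc]
              exact ENNReal.mul_lt_top hMS (by norm_num)
      exact hlt.ne
    have hkey := core_forward m g hm hgm hmfin hH
    have hGoalInt : ∫⁻ t in Ioc (0:ℝ) 1,
        G ((fun x : EuclideanSpace ℝ (Fin d) => t ^ (1 / (2 * β)) • x) ⁻¹' A)
        = ∫⁻ t in Ioc (0:ℝ) 1, g (Real.sqrt t) := by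
      refine setLIntegral_congr_fun measurableSet_Ioc ?_
      intro t ht
      beta_reduce
      rw [hsq ht.1.le]
      exact hconvG ⟨Real.sqrt_pos.2 ht.1, Real.sqrt_le_one.mpr ht.2⟩
    rw [hMA, hGoalInt, cov_sq g, two_pull g, half_two]
    exact hkey
  · intro h A hA hbd
    obtain ⟨ε, hε, hεA⟩ := hbd
    set S : Set (EuclideanSpace ℝ (Fin d)) := {x | ε ≤ ‖x‖} with hS_def
    have hS : MeasurableSet S := measurableSet_le measurable_const measurable_norm
    have hMS : M S < ⊤ := aux_finite M hM hε
    have hGS : G S < ⊤ := aux_finite G hG hε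
    haveI : IsFiniteMeasure (M.restrict S) := ⟨by rwa [Measure.restrict_apply_univ]⟩
    haveI : IsFiniteMeasure (G.restrict S) := ⟨by rwa [Measure.restrict_apply_univ]⟩
    set m : ℝ → ℝ≥0∞ := fun t =>
      M.restrict S ((fun x : EuclideanSpace ℝ (Fin d) => t ^ (1 / β) • x) ⁻¹' A) with hm_def
    set g : ℝ → ℝ≥0∞ := fun t =>
      G.restrict S ((fun x : EuclideanSpace ℝ (Fin d) => t ^ (1 / β) • x) ⁻¹' A) with hg_def
    have hrpow_meas : Measurable fun t : ℝ => t ^ (1 / β) :=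
      (Real.continuous_rpow_const hβ'.le).measurable
    have hgm : Measurable g := (meas_dilate (G.restrict S) hA).comp hrpow_meas
    have hmem : ∀ {u : ℝ}, u ∈ Ioc (0:ℝ) 1 → ∀ {e : ℝ}, 0 ≤ e → (0 < u ^ e ∧ u ^ e ≤ 1) := by
      intro u hu e he
      exact ⟨Real.rpow_pos_of_pos hu.1 _, Real.rpow_le_one hu.1.le hu.2 he⟩
    have hconvM : ∀ {u : ℝ}, u ∈ Ioc (0:ℝ) 1 →
        M ((fun x : EuclideanSpace ℝ (Fin d) => u ^ (1 / β) • x) ⁻¹' A) = m u := by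
      intro u hu
      obtain ⟨h1, h2⟩ := hmem hu hβ'.le
      exact (restrict_eq_of_subset M hS (dil_subset hεA h1 h2)).symm
    have hconvG : ∀ {u : ℝ}, u ∈ Ioc (0:ℝ) 1 →
        G ((fun x : EuclideanSpace ℝ (Fin d) => u ^ (1 / β) • x) ⁻¹' A) = g u := by
      intro u hu
      obtain ⟨h1, h2⟩ := hmem hu hβ'.le
      exact (restrict_eq_of_subset G hS (dil_subset hεA h1 h2)).symm
    have hsq : ∀ {t : ℝ}, 0 ≤ t → t ^ (1 / (2 * β)) = (Real.sqrt t) ^ (1 / β) := by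
      intro t ht
      have he : (1:ℝ) / (2 * β) = (1/2) * (1/β) := by rw [div_mul_div_comm, one_mul]
      rw [he, Real.rpow_mul ht, Real.sqrt_eq_rpow]
    have hMA : M A = m 1 := by
      simp only [hm_def, Real.one_rpow, dil_one]
      exact (restrict_eq_of_subset M hS (fun x hx => hεA x hx)).symm
    have hH : ∀ s ∈ Ioc (0:ℝ) 1,
        m s = ∫⁻ u in Ioc (0:ℝ) 1, ENNReal.ofReal u * g (s * u) := by
      intro s hs
      obtain ⟨hs1, hs2⟩ := hmem hs hβ'.le
      have h0 := h ((fun x : EuclideanSpace ℝ (Fin d) => s ^ (1 / β) • x) ⁻¹' A)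
        (hA.preimage (measurable_const_smul _))
        ⟨ε, hε, fun x hx => dil_subset hεA hs1 hs2 hx⟩
      have hI : ∫⁻ t in Ioc (0:ℝ) 1,
          G ((fun x : EuclideanSpace ℝ (Fin d) => t ^ (1 / (2 * β)) • x) ⁻¹'
            ((fun x : EuclideanSpace ℝ (Fin d) => s ^ (1 / β) • x) ⁻¹' A))
          = ∫⁻ t in Ioc (0:ℝ) 1, g (s * Real.sqrt t) := by
        refine setLIntegral_congr_fun measurableSet_Ioc ?_
        intro t ht
        beta_reduce
        rw [dil_dil]
        have hsc : s ^ (1 / β) * t ^ (1 / (2 * β)) = (s * Real.sqrt t) ^ (1 / β) := by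
          rw [Real.mul_rpow hs.1.le (Real.sqrt_nonneg t), hsq ht.1.le]
        rw [hsc]
        refine hconvG ⟨mul_pos hs.1 (Real.sqrt_pos.2 ht.1), ?_⟩
        have h1 := Real.sqrt_le_one.mpr ht.2
        nlinarith [Real.sqrt_nonneg t, hs.1.le, hs.2]
      rw [hconvM hs, hI] at h0
      calc m s = (∫⁻ t in Ioc (0:ℝ) 1, g (s * Real.sqrt t)) / 2 := h0
        _ = (∫⁻ u in Ioc (0:ℝ) 1, ENNReal.ofReal (2 * u) * g (s * u)) / 2 := by
            exact congrArg (· / 2) (cov_sq fun v => g (s * v))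
        _ = (2 * ∫⁻ u in Ioc (0:ℝ) 1, ENNReal.ofReal u * g (s * u)) / 2 := by
            exact congrArg (· / 2) (two_pull fun v => g (s * v))
        _ = ∫⁻ u in Ioc (0:ℝ) 1, ENNReal.ofReal u * g (s * u) := half_two _
    have hkey := core_reverse m g hgm hH
    have hL : ∫⁻ t in Ioc (0:ℝ) 1,
        M ((fun x : EuclideanSpace ℝ (Fin d) => t ^ (1 / β) • x) ⁻¹' A)
        = ∫⁻ t in Ioc (0:ℝ) 1, m t :=
      setLIntegral_congr_fun measurableSet_Ioc
        fun t ht => hconvM ht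
    have hR : ∫⁻ t in Ioc (0:ℝ) 1,
        G ((fun x : EuclideanSpace ℝ (Fin d) => t ^ (1 / β) • x) ⁻¹' A)
        = ∫⁻ t in Ioc (0:ℝ) 1, g t :=
      setLIntegral_congr_fun measurableSet_Ioc
        fun t ht => hconvG ht
    rw [hL, hR, hMA]
    exact hkey
end
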